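/- arXiv:1810.11991 — 2 statements merged into one kernel-verified Lean document; each statement's English description precedes it below -/
import Mathlib

section
/- With a, b, x₃, y₃ defined as above on {u₁ ≠ u₂} ⊂ ℝ⁴, the Poisson brackets satisfy {b, x₃} = 2y₃, {b, y₃} = 3x₃² + a, and {x₃, y₃} = −1. -/
/-! With `k` the slope of the chord through `(u₁, p₁)` and `(u₂, p₂)`, one has `x₃ = k² − u₁ − u₂`
and `y₃ = p₁ + k (x₃ − u₁)`, so the differentials of `x₃` and `y₃` follow by the chain rule from
`dk = (dp₁ − dp₂ − k (du₁ − du₂)) / (u₁ − u₂)`. Each bracket is then a rational identity in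
`(u₁, u₂, p₁, p₂)` whose only denominator is a power of `u₁ − u₂`. -/

/-- Canonical Poisson bracket on phase space ℝ⁴ with coordinates
(u₁, u₂, p₁, p₂):  {F,G} = Σᵢ (∂F/∂uᵢ ∂G/∂pᵢ − ∂F/∂pᵢ ∂G/∂uᵢ). -/
noncomputable def pb (F G : ℝ × ℝ × ℝ × ℝ → ℝ) (z : ℝ × ℝ × ℝ × ℝ) : ℝ :=
  fderiv ℝ F z (1, 0, 0, 0) * fderiv ℝ G z (0, 0, 1, 0)
  - fderiv ℝ F z (0, 0, 1, 0) * fderiv ℝ G z (1, 0, 0, 0)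
  + fderiv ℝ F z (0, 1, 0, 0) * fderiv ℝ G z (0, 0, 0, 1)
  - fderiv ℝ F z (0, 0, 0, 1) * fderiv ℝ G z (0, 1, 0, 0)

noncomputable def aFun (z : ℝ × ℝ × ℝ × ℝ) : ℝ :=
  z.2.2.1 ^ 2 / (z.1 - z.2.1) + z.2.2.2 ^ 2 / (z.2.1 - z.1)
    - z.1 ^ 2 - z.1 * z.2.1 - z.2.1 ^ 2

noncomputable def bFun (z : ℝ × ℝ × ℝ × ℝ) : ℝ :=
  z.2.1 * z.2.2.1 ^ 2 / (z.2.1 - z.1) + z.1 * z.2.2.2 ^ 2 / (z.1 - z.2.1)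
    + (z.1 + z.2.1) * z.1 * z.2.1

noncomputable def x₃Fun (z : ℝ × ℝ × ℝ × ℝ) : ℝ :=
  ((z.2.2.1 - z.2.2.2) / (z.1 - z.2.1)) ^ 2 - (z.1 + z.2.1)

noncomputable def y₃Fun (z : ℝ × ℝ × ℝ × ℝ) : ℝ :=
  z.2.2.1 + ((z.2.2.1 - z.2.2.2) / (z.1 - z.2.1)) * (x₃Fun z - z.1)

noncomputable def chordSlope (z : ℝ × ℝ × ℝ × ℝ) : ℝ := (z.2.2.1 - z.2.2.2) / (z.1 - z.2.1)

section
variable {z : ℝ × ℝ × ℝ × ℝ}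

theorem differentiableAt_chordSlope (hz : z.1 ≠ z.2.1) : DifferentiableAt ℝ chordSlope z := by
  unfold chordSlope
  fun_prop (disch := exact sub_ne_zero.mpr hz)

theorem fderiv_chordSlope_apply (hz : z.1 ≠ z.2.1) (v : ℝ × ℝ × ℝ × ℝ) :
    fderiv ℝ chordSlope z v
      = (v.2.2.1 - v.2.2.2 - chordSlope z * (v.1 - v.2.1)) / (z.1 - z.2.1) := by
  have hd : z.1 - z.2.1 ≠ 0 := sub_ne_zero.mpr hz
  have hw := hasFDerivAt_id (𝕜 := ℝ) z
  have h := (hw.snd.snd.fst.sub hw.snd.snd.snd).mul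
    ((hasFDerivAt_inv hd).comp z (hw.fst.sub hw.snd.fst))
  rw [show chordSlope = fun w => (w.2.2.1 - w.2.2.2) * (w.1 - w.2.1)⁻¹ from
    funext fun w => div_eq_mul_inv _ _]
  erw [h.fderiv]
  simp only [id_eq, Pi.sub_apply, ContinuousLinearMap.comp_id, ContinuousLinearMap.comp_sub,
    Function.comp_apply, add_apply, smul_apply, sub_apply, ContinuousLinearMap.comp_apply,
    ContinuousLinearMap.coe_fst', ContinuousLinearMap.toSpanSingleton_apply, smul_eq_mul, mul_neg,
    ContinuousLinearMap.coe_snd', sub_neg_eq_add]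
  field_simp
  ring

theorem differentiableAt_x₃Fun (hz : z.1 ≠ z.2.1) : DifferentiableAt ℝ x₃Fun z := by
  unfold x₃Fun
  fun_prop (disch := exact sub_ne_zero.mpr hz)

theorem fderiv_x₃Fun_apply (hz : z.1 ≠ z.2.1) (v : ℝ × ℝ × ℝ × ℝ) :
    fderiv ℝ x₃Fun z v = 2 * chordSlope z * fderiv ℝ chordSlope z v - (v.1 + v.2.1) := by
  have hw := hasFDerivAt_id (𝕜 := ℝ) z
  have h := ((differentiableAt_chordSlope hz).hasFDerivAt.pow 2).sub (hw.fst.add hw.snd.fst)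
  rw [show x₃Fun = fun w => chordSlope w ^ 2 - (w.1 + w.2.1) from rfl]
  erw [h.fderiv]
  simp

theorem fderiv_y₃Fun_apply (hz : z.1 ≠ z.2.1) (v : ℝ × ℝ × ℝ × ℝ) :
    fderiv ℝ y₃Fun z v = v.2.2.1 + fderiv ℝ chordSlope z v * (x₃Fun z - z.1)
      + chordSlope z * (fderiv ℝ x₃Fun z v - v.1) := by
  have hw := hasFDerivAt_id (𝕜 := ℝ) z
  have h := hw.snd.snd.fst.add ((differentiableAt_chordSlope hz).hasFDerivAt.mul
    ((differentiableAt_x₃Fun hz).hasFDerivAt.sub hw.fst))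
  rw [show y₃Fun = fun w => w.2.2.1 + chordSlope w * (x₃Fun w - w.1) from rfl]
  erw [h.fderiv]
  simp only [ContinuousLinearMap.comp_id, id_eq, Pi.sub_apply, add_apply,
    ContinuousLinearMap.comp_apply, ContinuousLinearMap.coe_snd', ContinuousLinearMap.coe_fst',
    smul_apply, sub_apply, smul_eq_mul]
  ring

theorem fderiv_bFun_apply (hz : z.1 ≠ z.2.1) (v : ℝ × ℝ × ℝ × ℝ) :
    fderiv ℝ bFun z v
      = (z.2.1 * (z.2.2.1 ^ 2 - z.2.2.2 ^ 2) / (z.1 - z.2.1) ^ 2 + z.2.1 * (2 * z.1 + z.2.1)) * v.1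
        + (z.1 * (z.2.2.2 ^ 2 - z.2.2.1 ^ 2) / (z.1 - z.2.1) ^ 2 + z.1 * (z.1 + 2 * z.2.1)) * v.2.1
        - 2 * z.2.1 * z.2.2.1 / (z.1 - z.2.1) * v.2.2.1
        + 2 * z.1 * z.2.2.2 / (z.1 - z.2.1) * v.2.2.2 := by
  have hd : z.1 - z.2.1 ≠ 0 := sub_ne_zero.mpr hz
  have hd' : z.2.1 - z.1 ≠ 0 := sub_ne_zero.mpr hz.symm
  have hw := hasFDerivAt_id (𝕜 := ℝ) z
  have h := (((hw.snd.fst.mul (hw.snd.snd.fst.pow 2)).mul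
      ((hasFDerivAt_inv hd').comp z (hw.snd.fst.sub hw.fst))).add
    ((hw.fst.mul (hw.snd.snd.snd.pow 2)).mul
      ((hasFDerivAt_inv hd).comp z (hw.fst.sub hw.snd.fst)))).add
    (((hw.fst.add hw.snd.fst).mul hw.fst).mul hw.snd.fst)
  have hb : bFun = fun w => w.2.1 * w.2.2.1 ^ 2 * (w.2.1 - w.1)⁻¹
      + w.1 * w.2.2.2 ^ 2 * (w.1 - w.2.1)⁻¹ + (w.1 + w.2.1) * w.1 * w.2.1 := by
    funext w
    simp only [bFun, div_eq_mul_inv]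
  rw [hb]
  erw [h.fderiv]
  simp only [id_eq, Pi.mul_apply, ContinuousLinearMap.comp_id, ContinuousLinearMap.comp_sub,
    Function.comp_apply, Pi.sub_apply, Nat.add_one_sub_one, pow_one, nsmul_eq_mul, Nat.cast_ofNat,
    smul_add, Pi.add_apply, add_apply, smul_apply, sub_apply, ContinuousLinearMap.comp_apply,
    ContinuousLinearMap.coe_snd', ContinuousLinearMap.coe_fst',
    ContinuousLinearMap.toSpanSingleton_apply, smul_eq_mul, mul_neg, sub_neg_eq_add]
  field_simp
  ring

theorem pb_bFun_x₃Fun (hz : z.1 ≠ z.2.1) : pb bFun x₃Fun z = 2 * y₃Fun z := by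
  have hd : z.1 - z.2.1 ≠ 0 := sub_ne_zero.mpr hz
  simp only [pb, fderiv_bFun_apply hz, fderiv_x₃Fun_apply hz, fderiv_chordSlope_apply hz]
  simp only [y₃Fun, x₃Fun, chordSlope]
  field_simp
  ring

theorem pb_bFun_y₃Fun (hz : z.1 ≠ z.2.1) : pb bFun y₃Fun z = 3 * x₃Fun z ^ 2 + aFun z := by
  have hd : z.1 - z.2.1 ≠ 0 := sub_ne_zero.mpr hz
  have hd' : z.2.1 - z.1 ≠ 0 := sub_ne_zero.mpr hz.symm
  simp only [pb, fderiv_bFun_apply hz, fderiv_y₃Fun_apply hz, fderiv_x₃Fun_apply hz,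
    fderiv_chordSlope_apply hz]
  simp only [aFun, x₃Fun, chordSlope]
  field_simp
  ring

theorem pb_x₃Fun_y₃Fun (hz : z.1 ≠ z.2.1) : pb x₃Fun y₃Fun z = -1 := by
  have hd : z.1 - z.2.1 ≠ 0 := sub_ne_zero.mpr hz
  simp only [pb, fderiv_y₃Fun_apply hz, fderiv_x₃Fun_apply hz, fderiv_chordSlope_apply hz]
  simp only [x₃Fun, chordSlope]
  field_simp
  ring

end

/-- {b, x₃} = 2y₃, {b, y₃} = 3x₃² + a, {x₃, y₃} = −1 on {u₁ ≠ u₂}. -/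
theorem stmt_3 :
    ∀ z : ℝ × ℝ × ℝ × ℝ, z.1 ≠ z.2.1 →
      pb bFun x₃Fun z = 2 * y₃Fun z ∧
      pb bFun y₃Fun z = 3 * (x₃Fun z) ^ 2 + aFun z ∧
      pb x₃Fun y₃Fun z = -1 :=
  fun _ hz => ⟨pb_bFun_x₃Fun hz, pb_bFun_y₃Fun hz, pb_x₃Fun_y₃Fun hz⟩
end

section
/- For positive integers k₁, k₂ and parameters α₁ < α₂ < α₃, the deformed geodesic Hamiltonian H = φ(u₁)p_{u₁}²/(k₁²(u₁−u₂)) + φ(u₂)p_{u₂}²/(k₂²(u₂−u₁)) with φ(z) = (z−α₁)(z−α₂)(z−α₃), Poisson-commutes with I₂ = u₂φ(u₁)p_{u₁}²/(k₁²(u₂−u₁)) + u₁φ(u₂)p_{u₂}²/(k₂²(u₁−u₂)). -/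
theorem HasFDerivAt.div {𝕜 E : Type*} [NontriviallyNormedField 𝕜] [NormedAddCommGroup E]
    [NormedSpace 𝕜 E] {c d : E → 𝕜} {c' d' : E →L[𝕜] 𝕜} {x : E}
    (hc : HasFDerivAt c c' x) (hd : HasFDerivAt d d' x) (hx : d x ≠ 0) :
    HasFDerivAt (fun y => c y / d y) ((d x ^ 2)⁻¹ • (d x • c' - c x • d')) x := by
  have h : HasFDerivAt (fun y => c y * (d y)⁻¹) _ x := hc.mul ((hasFDerivAt_inv hx).comp x hd)
  simp only [div_eq_mul_inv]
  refine h.congr_fderiv ?_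
  ext v
  simp only [add_apply, smul_apply, sub_apply, ContinuousLinearMap.comp_apply,
    ContinuousLinearMap.toSpanSingleton_apply, smul_eq_mul]
  field_simp
  ring

theorem pb_eq_of_hasFDerivAt {F G : ℝ × ℝ × ℝ × ℝ → ℝ} {F' G' : ℝ × ℝ × ℝ × ℝ →L[ℝ] ℝ}
    {z : ℝ × ℝ × ℝ × ℝ} (hF : HasFDerivAt F F' z) (hG : HasFDerivAt G G' z) :
    pb F G z = F' (1, 0, 0, 0) * G' (0, 0, 1, 0) - F' (0, 0, 1, 0) * G' (1, 0, 0, 0)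
      + F' (0, 1, 0, 0) * G' (0, 0, 0, 1) - F' (0, 0, 0, 1) * G' (0, 1, 0, 0) := by
  rw [pb, hF.fderiv, hG.fderiv]

noncomputable def stackelHamiltonian (f₁ f₂ : ℝ × ℝ → ℝ) (z : ℝ × ℝ × ℝ × ℝ) : ℝ :=
  f₁ (z.1, z.2.2.1) / (z.1 - z.2.1) + f₂ (z.2.1, z.2.2.2) / (z.2.1 - z.1)

noncomputable def stackelIntegral (f₁ f₂ : ℝ × ℝ → ℝ) (z : ℝ × ℝ × ℝ × ℝ) : ℝ :=
  z.2.1 * f₁ (z.1, z.2.2.1) / (z.2.1 - z.1) + z.1 * f₂ (z.2.1, z.2.2.2) / (z.1 - z.2.1)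

theorem pb_stackelHamiltonian_stackelIntegral (f₁ f₂ : ℝ × ℝ → ℝ) (z : ℝ × ℝ × ℝ × ℝ)
    (hz : z.1 ≠ z.2.1) (hf₁ : DifferentiableAt ℝ f₁ (z.1, z.2.2.1))
    (hf₂ : DifferentiableAt ℝ f₂ (z.2.1, z.2.2.2)) :
    pb (stackelHamiltonian f₁ f₂) (stackelIntegral f₁ f₂) z = 0 := by
  have hu := hasFDerivAt_fst (𝕜 := ℝ) (p := z)
  have hv := (hasFDerivAt_snd (𝕜 := ℝ) (p := z)).fst
  have hg₁ : HasFDerivAt (fun z : ℝ × ℝ × ℝ × ℝ => f₁ (z.1, z.2.2.1)) _ z :=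
    hf₁.hasFDerivAt.comp z (hu.prodMk hasFDerivAt_snd.snd.fst)
  have hg₂ : HasFDerivAt (fun z : ℝ × ℝ × ℝ × ℝ => f₂ (z.2.1, z.2.2.2)) _ z :=
    hf₂.hasFDerivAt.comp z (hv.prodMk hasFDerivAt_snd.snd.snd)
  have huv : z.1 - z.2.1 ≠ 0 := sub_ne_zero.mpr hz
  have hvu : z.2.1 - z.1 ≠ 0 := sub_ne_zero.mpr hz.symm
  have hH : HasFDerivAt (stackelHamiltonian f₁ f₂) _ z :=
    (hg₁.div (hu.sub hv) huv).add (hg₂.div (hv.sub hu) hvu)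
  have hI : HasFDerivAt (stackelIntegral f₁ f₂) _ z :=
    ((hv.mul hg₁).div (hv.sub hu) hvu).add ((hu.mul hg₂).div (hu.sub hv) huv)
  rw [pb_eq_of_hasFDerivAt hH hI]
  simp only [Pi.sub_apply, Pi.mul_apply, Prod.mk_zero_zero, add_apply, smul_apply, sub_apply,
    ContinuousLinearMap.comp_apply, ContinuousLinearMap.prod_apply, ContinuousLinearMap.coe_fst',
    ContinuousLinearMap.coe_snd', map_zero, smul_eq_mul]
  field_simp
  ring

theorem stmt_16_general (α₁ α₂ α₃ : ℝ) (k₁ k₂ : ℤ) :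
    ∀ z : ℝ × ℝ × ℝ × ℝ, z.1 ≠ z.2.1 →
      pb (fun z => (z.1 - α₁) * (z.1 - α₂) * (z.1 - α₃) * z.2.2.1 ^ 2
              / ((k₁ : ℝ) ^ 2 * (z.1 - z.2.1))
            + (z.2.1 - α₁) * (z.2.1 - α₂) * (z.2.1 - α₃) * z.2.2.2 ^ 2
              / ((k₂ : ℝ) ^ 2 * (z.2.1 - z.1)))
         (fun z => z.2.1 * ((z.1 - α₁) * (z.1 - α₂) * (z.1 - α₃)) * z.2.2.1 ^ 2
              / ((k₁ : ℝ) ^ 2 * (z.2.1 - z.1))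
            + z.1 * ((z.2.1 - α₁) * (z.2.1 - α₂) * (z.2.1 - α₃)) * z.2.2.2 ^ 2
              / ((k₂ : ℝ) ^ 2 * (z.1 - z.2.1))) z = 0 := by
  intro z hz
  convert pb_stackelHamiltonian_stackelIntegral
    (fun x => (x.1 - α₁) * (x.1 - α₂) * (x.1 - α₃) * x.2 ^ 2 / (k₁ : ℝ) ^ 2)
    (fun x => (x.1 - α₁) * (x.1 - α₂) * (x.1 - α₃) * x.2 ^ 2 / (k₂ : ℝ) ^ 2)
    z hz (by fun_prop) (by fun_prop) using 2 <;>
  · funext w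
    simp only [stackelHamiltonian, stackelIntegral, div_eq_mul_inv, mul_inv]
    ring

/-- The deformed geodesic Hamiltonian on the sphere Poisson-commutes with I₂
for positive integers k₁, k₂. -/
theorem stmt_16 (α₁ α₂ α₃ : ℝ) (h12 : α₁ < α₂) (h23 : α₂ < α₃)
    (k₁ k₂ : ℤ) (hk₁ : 1 ≤ k₁) (hk₂ : 1 ≤ k₂) :
    ∀ z : ℝ × ℝ × ℝ × ℝ, z.1 ≠ z.2.1 →
      pb (fun z => (z.1 - α₁) * (z.1 - α₂) * (z.1 - α₃) * z.2.2.1 ^ 2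
              / ((k₁ : ℝ) ^ 2 * (z.1 - z.2.1))
            + (z.2.1 - α₁) * (z.2.1 - α₂) * (z.2.1 - α₃) * z.2.2.2 ^ 2
              / ((k₂ : ℝ) ^ 2 * (z.2.1 - z.1)))
         (fun z => z.2.1 * ((z.1 - α₁) * (z.1 - α₂) * (z.1 - α₃)) * z.2.2.1 ^ 2
              / ((k₁ : ℝ) ^ 2 * (z.2.1 - z.1))
            + z.1 * ((z.2.1 - α₁) * (z.2.1 - α₂) * (z.2.1 - α₃)) * z.2.2.2 ^ 2
              / ((k₂ : ℝ) ^ 2 * (z.1 - z.2.1))) z = 0 :=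
  stmt_16_general α₁ α₂ α₃ k₁ k₂
end
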